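/- Suppose F : ℝ^d → ℝ is differentiable with L-Lipschitz gradient and F + R =: P where R is convex. Let H be symmetric positive definite, x, v ∈ ℝ^d, η > 0, x⁺ = prox_{ηR}^H(x − ηH⁻¹v), g = (x − x⁺)/η, and Δ = v − ∇F(x). If F and R are convex, then for every y ∈ ℝ^d: P(y) ≥ P(x⁺) + gᵀH(y − x) + Δᵀ(x⁺ − y) + η‖g‖²_H − (Lη²/2)‖g‖². -/

import Mathlib

/-!
The gradient inequality of `F` at `x`, tested at `y`, and the descent lemma
`F x⁺ ≤ F x + ⟪∇F x, x⁺ - x⟫ + L/2 ‖x⁺ - x‖²` bound `F`; the first-order optimality condition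
of the `H`-prox step, `H (u - x⁺) ∈ ∂(ηR)(x⁺)` with `u = x - η H⁻¹ v`, bounds `R`. Adding them, the
claim becomes an identity once `x⁺ = x - η g` is substituted.

Since `F` is only known through its gradient inequality, the descent lemma is derived from it: the
two gradient inequalities between `a` and `a + h` pin `F (a + h) - F a - ⟪∇F a, h⟫` between `0` and
`L ‖h‖²`, so `F` is differentiable, and the mean value theorem applied to
`t ↦ F (x + t h) - t ⟪∇F x, h⟫ - L/2 t² ‖h‖²` gives the bound. The optimality condition comes from
comparing `x⁺` with the points `x⁺ + t (y - x⁺)` and letting `t → 0`.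
-/

open Matrix Filter Set Topology
open scoped RealInnerProductSpace

theorem le_of_forall_mem_Ioc_le_add_mul {a b c : ℝ} (h : ∀ t ∈ Ioc (0 : ℝ) 1, c ≤ a + t * b) :
    c ≤ a := by
  have hlim : Tendsto (fun t => a + t * b) (𝓝[>] 0) (𝓝 a) := by
    have : Tendsto (fun t => a + t * b) (𝓝 0) (𝓝 (a + 0 * b)) :=
      (continuous_const.add (continuous_id.mul continuous_const)).tendsto 0
    simpa using this.mono_left nhdsWithin_le_nhds
  exact ge_of_tendsto hlim (eventually_of_mem (Ioc_mem_nhdsGT zero_lt_one) h)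

section Smooth

variable {E : Type*} [NormedAddCommGroup E] [InnerProductSpace ℝ E] {f : E → ℝ} {f' : E → E}
  {L : ℝ}

theorem le_add_inner_add_mul_norm_sq_of_subgradient
    (hsub : ∀ a b, f a + ⟪f' a, b - a⟫ ≤ f b) (hlip : ∀ a b, ‖f' a - f' b‖ ≤ L * ‖a - b‖)
    (a h : E) : f (a + h) ≤ f a + ⟪f' a, h⟫ + L * ‖h‖ ^ 2 := by
  have upper : f (a + h) - ⟪f' (a + h), h⟫ ≤ f a := by
    simpa [sub_eq_add_neg, inner_neg_right] using hsub (a + h) a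
  have hcross : ⟪f' (a + h) - f' a, h⟫ ≤ L * ‖h‖ ^ 2 := calc
    _ ≤ ‖f' (a + h) - f' a‖ * ‖h‖ := real_inner_le_norm _ _
    _ ≤ L * ‖h‖ * ‖h‖ := by gcongr; simpa using hlip (a + h) a
    _ = L * ‖h‖ ^ 2 := by ring
  rw [inner_sub_left] at hcross
  linarith

theorem hasFDerivAt_of_subgradient_of_lipschitz
    (hsub : ∀ a b, f a + ⟪f' a, b - a⟫ ≤ f b) (hlip : ∀ a b, ‖f' a - f' b‖ ≤ L * ‖a - b‖)
    (a : E) : HasFDerivAt f (innerSL ℝ (f' a)) a := by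
  rw [hasFDerivAt_iff_isLittleO_nhds_zero]
  refine Asymptotics.IsBigO.trans_isLittleO ?_ (Asymptotics.isLittleO_norm_pow_id one_lt_two)
  refine Asymptotics.IsBigO.of_bound L (Eventually.of_forall fun h => ?_)
  have lower : f a + ⟪f' a, h⟫ ≤ f (a + h) := by simpa using hsub a (a + h)
  have upper := le_add_inner_add_mul_norm_sq_of_subgradient hsub hlip a h
  rw [innerSL_apply_apply, Real.norm_eq_abs, abs_of_nonneg (by linarith), norm_pow, norm_norm]
  linarith

theorem le_add_inner_add_half_mul_norm_sq_of_subgradient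
    (hsub : ∀ a b, f a + ⟪f' a, b - a⟫ ≤ f b) (hlip : ∀ a b, ‖f' a - f' b‖ ≤ L * ‖a - b‖)
    (x h : E) : f (x + h) ≤ f x + ⟪f' x, h⟫ + L / 2 * ‖h‖ ^ 2 := by
  set ψ : ℝ → ℝ := fun t => f (x + t • h) - t * ⟪f' x, h⟫ - L / 2 * t ^ 2 * ‖h‖ ^ 2
  have hψ : ∀ t, HasDerivAt ψ (⟪f' (x + t • h), h⟫ - ⟪f' x, h⟫ - L * t * ‖h‖ ^ 2) t := by
    intro t
    have hline : HasDerivAt (fun t : ℝ => x + t • h) h t := by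
      simpa using ((hasDerivAt_id t).smul_const h).const_add x
    have hf := (hasFDerivAt_of_subgradient_of_lipschitz hsub hlip _).comp_hasDerivAt t hline
    refine ((hf.sub ((hasDerivAt_id' t).mul_const ⟪f' x, h⟫)).sub
      (((hasDerivAt_pow 2 t).const_mul (L / 2)).mul_const (‖h‖ ^ 2))).congr_deriv ?_
    simp only [innerSL_apply_apply]
    ring
  obtain ⟨c, hc, hslope⟩ := exists_hasDerivAt_eq_slope ψ _ zero_lt_one
    (continuous_iff_continuousAt.2 fun t => (hψ t).continuousAt).continuousOn (fun t _ => hψ t)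
  have hgrowth : ⟪f' (x + c • h) - f' x, h⟫ ≤ L * c * ‖h‖ ^ 2 := calc
    _ ≤ ‖f' (x + c • h) - f' x‖ * ‖h‖ := real_inner_le_norm _ _
    _ ≤ L * ‖c • h‖ * ‖h‖ := by gcongr; simpa using hlip (x + c • h) x
    _ = L * c * ‖h‖ ^ 2 := by rw [norm_smul, Real.norm_of_nonneg hc.1.le]; ring
  rw [inner_sub_left] at hgrowth
  simp only [ψ, zero_smul, add_zero, one_smul, sub_zero] at hslope
  linarith

end Smooth

section Quadratic

variable {ι : Type*} [Fintype ι]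

theorem Matrix.IsSymm.dotProduct_mulVec_comm {R : Type*} [CommSemiring R] {H : Matrix ι ι R}
    (hH : H.IsSymm) (a b : ι → R) : a ⬝ᵥ (H *ᵥ b) = b ⬝ᵥ (H *ᵥ a) := by
  rw [dotProduct_mulVec, ← mulVec_transpose, hH.eq, dotProduct_comm]

theorem Matrix.IsSymm.dotProduct_mulVec_add_smul {H : Matrix ι ι ℝ} (hH : H.IsSymm)
    (a b : ι → ℝ) (t : ℝ) :
    (a + t • b) ⬝ᵥ (H *ᵥ (a + t • b))
      = a ⬝ᵥ (H *ᵥ a) + 2 * t * (b ⬝ᵥ (H *ᵥ a)) + t ^ 2 * (b ⬝ᵥ (H *ᵥ b)) := by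
  simp only [mulVec_add, mulVec_smul, add_dotProduct, dotProduct_add, smul_dotProduct,
    dotProduct_smul, hH.dotProduct_mulVec_comm a b, smul_eq_mul]
  ring

theorem ConvexOn.add_dotProduct_mulVec_sub_le_of_isMinOn {R : (ι → ℝ) → ℝ} {H : Matrix ι ι ℝ}
    (hR : ConvexOn ℝ univ R) (hH : H.IsSymm) {p u : ι → ℝ}
    (hmin : IsMinOn (fun z => R z + 1 / 2 * ((z - u) ⬝ᵥ (H *ᵥ (z - u)))) univ p) (y : ι → ℝ) :
    R p + (y - p) ⬝ᵥ (H *ᵥ (u - p)) ≤ R y := by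
  suffices R p - R y ≤ (y - p) ⬝ᵥ (H *ᵥ (p - u)) by
    rw [← neg_sub p u, mulVec_neg, dotProduct_neg]; linarith
  refine le_of_forall_mem_Ioc_le_add_mul (b := 1 / 2 * ((y - p) ⬝ᵥ (H *ᵥ (y - p)))) ?_
  rintro t ⟨ht0, ht1⟩
  have hconv : R (p + t • (y - p)) ≤ (1 - t) * R p + t * R y := by
    simpa [smul_sub, sub_smul, add_sub, add_comm] using
      hR.2 (mem_univ p) (mem_univ y) (sub_nonneg.2 ht1) ht0.le (by ring)
  have hz := isMinOn_univ_iff.1 hmin (p + t • (y - p))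
  rw [show p + t • (y - p) - u = (p - u) + t • (y - p) by abel,
    hH.dotProduct_mulVec_add_smul] at hz
  have hscaled : t * (R p - R y)
      ≤ t * ((y - p) ⬝ᵥ (H *ᵥ (p - u)) + t * (1 / 2 * ((y - p) ⬝ᵥ (H *ᵥ (y - p))))) := by
    nlinarith
  exact le_of_mul_le_mul_left hscaled ht0

end Quadratic

theorem le_add_dotProduct_add_half_mul_dotProduct_of_subgradient {ι : Type*} [Fintype ι]
    {f : (ι → ℝ) → ℝ} {f' : (ι → ℝ) → ι → ℝ} {L : ℝ}
    (hsub : ∀ a b, f a + f' a ⬝ᵥ (b - a) ≤ f b)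
    (hlip : ∀ a b, √((f' a - f' b) ⬝ᵥ (f' a - f' b)) ≤ L * √((a - b) ⬝ᵥ (a - b)))
    (x h : ι → ℝ) : f (x + h) ≤ f x + f' x ⬝ᵥ h + L / 2 * (h ⬝ᵥ h) := by
  have hinner : ∀ a b : ι → ℝ, ⟪WithLp.toLp 2 a, WithLp.toLp 2 b⟫ = a ⬝ᵥ b := fun a b => by
    rw [EuclideanSpace.inner_toLp_toLp, star_trivial, dotProduct_comm]
  have hnorm : ∀ a : ι → ℝ, ‖WithLp.toLp 2 a‖ = √(a ⬝ᵥ a) := fun a => by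
    rw [norm_eq_sqrt_real_inner, hinner]
  have key := le_add_inner_add_half_mul_norm_sq_of_subgradient (E := EuclideanSpace ℝ ι)
    (f := fun a => f a.ofLp) (f' := fun a => WithLp.toLp 2 (f' a.ofLp)) (L := L)
    (fun a b => by simpa [← WithLp.toLp_sub, hinner] using hsub a.ofLp b.ofLp)
    (fun a b => by simpa [← WithLp.toLp_sub, hnorm] using hlip a.ofLp b.ofLp)
    (WithLp.toLp 2 x) (WithLp.toLp 2 h)
  rwa [← WithLp.toLp_add, hinner, ← real_inner_self_eq_norm_sq, hinner] at key

theorem stmt11_general {d : ℕ} (F R : (Fin d → ℝ) → ℝ) (L : ℝ)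
    (gF : (Fin d → ℝ) → (Fin d → ℝ))
    -- F convex with gradient gF
    (hFconv : ∀ a b, F a + gF a ⬝ᵥ (b - a) ≤ F b)
    -- gF is L-Lipschitz in the Euclidean norm
    (hLip : ∀ a b, Real.sqrt ((gF a - gF b) ⬝ᵥ (gF a - gF b)) ≤
        L * Real.sqrt ((a - b) ⬝ᵥ (a - b)))
    (hR : ConvexOn ℝ Set.univ R)
    (H : Matrix (Fin d) (Fin d) ℝ) (hsym : H.IsSymm) (hpd : H.PosDef)
    (η : ℝ) (hη : 0 < η) (x v : Fin d → ℝ)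
    -- xp = prox_{ηR}^H(x − ηH⁻¹v)
    (xp : Fin d → ℝ)
    (hxp : ∀ z, η * R xp + (1 / 2) *
          ((xp - (x - η • (H⁻¹ *ᵥ v))) ⬝ᵥ (H *ᵥ (xp - (x - η • (H⁻¹ *ᵥ v)))))
        ≤ η * R z + (1 / 2) *
          ((z - (x - η • (H⁻¹ *ᵥ v))) ⬝ᵥ (H *ᵥ (z - (x - η • (H⁻¹ *ᵥ v))))))
    (g Δ : Fin d → ℝ) (hg : g = η⁻¹ • (x - xp)) (hΔ : Δ = v - gF x) :
    ∀ y, F xp + R xp + g ⬝ᵥ (H *ᵥ (y - x)) + Δ ⬝ᵥ (xp - y)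
        + (η * (g ⬝ᵥ (H *ᵥ g)) - (L * η ^ 2 / 2) * (g ⬝ᵥ g))
      ≤ F y + R y := by
  intro y
  have hxp_eq : xp = x - η • g := by
    rw [hg, smul_smul, mul_inv_cancel₀ hη.ne', one_smul, sub_sub_cancel]
  have hHstep : H *ᵥ (x - η • (H⁻¹ *ᵥ v) - xp) = η • (H *ᵥ g - v) := by
    rw [hxp_eq, sub_sub_sub_cancel_left, ← smul_sub, mulVec_smul, mulVec_sub, mulVec_mulVec,
      mul_nonsing_inv _ ((isUnit_iff_isUnit_det H).1 hpd.isUnit), one_mulVec]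
  have hprox : R xp + (y - xp) ⬝ᵥ (H *ᵥ g - v) ≤ R y := by
    have h := (hR.smul hη.le).add_dotProduct_mulVec_sub_le_of_isMinOn hsym
      (fun z _ => hxp z) y
    rw [hHstep, dotProduct_smul] at h
    simp only [smul_eq_mul] at h
    exact le_of_mul_le_mul_left (by linarith) hη
  have hdesc := le_add_dotProduct_add_half_mul_dotProduct_of_subgradient hFconv hLip x (xp - x)
  have hconv := hFconv x y
  rw [add_sub_cancel] at hdesc
  subst hΔ xp
  simp only [dotProduct_sub, sub_dotProduct, dotProduct_smul, smul_dotProduct, mulVec_sub,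
    smul_eq_mul, sub_sub_cancel_left, dotProduct_neg, neg_dotProduct] at hprox hdesc hconv ⊢
  linear_combination hprox + hdesc + hconv + hsym.dotProduct_mulVec_comm g y
    - hsym.dotProduct_mulVec_comm g x + dotProduct_comm v x - dotProduct_comm v y
    - η * dotProduct_comm v g

/-- key inequality (Lemma 2) for the scaled proximal step. -/
theorem stmt11 {d : ℕ} (F R : (Fin d → ℝ) → ℝ) (L : ℝ) (hL : 0 < L)
    (gF : (Fin d → ℝ) → (Fin d → ℝ))
    -- F convex with gradient gF
    (hFconv : ∀ a b, F a + gF a ⬝ᵥ (b - a) ≤ F b)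
    -- gF is L-Lipschitz in the Euclidean norm
    (hLip : ∀ a b, Real.sqrt ((gF a - gF b) ⬝ᵥ (gF a - gF b)) ≤
        L * Real.sqrt ((a - b) ⬝ᵥ (a - b)))
    (hR : ConvexOn ℝ Set.univ R)
    (H : Matrix (Fin d) (Fin d) ℝ) (hsym : H.IsSymm) (hpd : H.PosDef)
    (η : ℝ) (hη : 0 < η) (x v : Fin d → ℝ)
    -- xp = prox_{ηR}^H(x − ηH⁻¹v)
    (xp : Fin d → ℝ)
    (hxp : ∀ z, η * R xp + (1 / 2) *
          ((xp - (x - η • (H⁻¹ *ᵥ v))) ⬝ᵥ (H *ᵥ (xp - (x - η • (H⁻¹ *ᵥ v)))))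
        ≤ η * R z + (1 / 2) *
          ((z - (x - η • (H⁻¹ *ᵥ v))) ⬝ᵥ (H *ᵥ (z - (x - η • (H⁻¹ *ᵥ v))))))
    (g Δ : Fin d → ℝ) (hg : g = η⁻¹ • (x - xp)) (hΔ : Δ = v - gF x) :
    ∀ y, F xp + R xp + g ⬝ᵥ (H *ᵥ (y - x)) + Δ ⬝ᵥ (xp - y)
        + (η * (g ⬝ᵥ (H *ᵥ g)) - (L * η ^ 2 / 2) * (g ⬝ᵥ g))
      ≤ F y + R y :=
  stmt11_general F R L gF hFconv hLip hR H hsym hpd η hη x v xp hxp g Δ hg hΔ
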